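/- Every unit disk graph of height √3 admits a conflict-free 2-coloring. That is, if V is a finite set and p : V → ℝ² assigns to each vertex a point whose y-coordinate lies in [0, √3], then the simple graph on V in which distinct u, v are adjacent if and only if the Euclidean distance between p(u) and p(v) is at most 2 admits a conflict-free 2-coloring. -/

import Mathlib

/-- A conflict-free coloring of `G` with `k` colors: a partial coloring
(uncolored vertices get `none`) such that every vertex has, in its closed
neighborhood, a colored vertex whose color occurs exactly once there. -/
def IsCFColoring {V : Type*} (G : SimpleGraph V) {k : ℕ} (χ : V → Option (Fin k)) : Prop :=
  ∀ v : V, ∃ u ∈ insert v (G.neighborSet v), (χ u).isSome ∧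
    ∀ w ∈ insert v (G.neighborSet v), χ w = χ u → w = u

/-- `G` admits a conflict-free coloring with `k` colors. -/
def HasCFColoring {V : Type*} (G : SimpleGraph V) (k : ℕ) : Prop :=
  ∃ χ : V → Option (Fin k), IsCFColoring G χ

/-- The unit disk graph on points `p`: distinct vertices are adjacent iff the
Euclidean distance of their points is at most 2 (the unit disks intersect). -/
def unitDiskGraph {V : Type*} (p : V → EuclideanSpace ℝ (Fin 2)) : SimpleGraph V where
  Adj u v := u ≠ v ∧ dist (p u) (p v) ≤ 2
  symm := by
    constructor
    intro u v ⟨h1, h2⟩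
    exact ⟨h1.symm, by rwa [dist_comm]⟩
  loopless := by
    constructor
    intro v ⟨h1, _⟩
    exact h1 rfl

/-!
With `x` the first coordinate, points at horizontal distance at most `1` are adjacent (their
vertical distance is at most `√3`), and adjacent points are at horizontal distance at most `2`.
Choose points `s₀, s₁, …` greedily from left to right: `sᵢ₊₁` is the rightmost point within `1`
of the leftmost point beyond `x sᵢ + 1`. They dominate the graph, consecutive ones are more than
`1` apart, and no point lies in `(x sᵢ₊₁, x sᵢ + 2]`. So the closed neighbourhood of a vertex
contains some `sᵢ` and otherwise only `sᵢ₊₁` and `sᵢ₊₂`, the latter only together with `sᵢ₊₁`.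
Colouring `sᵢ` by the parity of `i`, either `sᵢ₊₁` or `sᵢ` has a unique colour there.
-/

lemma Nat.exists_mem_forall_mod_two_eq_imp_eq {J : Set ℕ} {i : ℕ} (hi : i ∈ J)
    (hJ : J ⊆ Set.Icc i (i + 2)) (hmid : i + 2 ∈ J → i + 1 ∈ J) :
    ∃ j ∈ J, ∀ k ∈ J, k % 2 = j % 2 → k = j := by
  by_cases h : i + 1 ∈ J
  · refine ⟨i + 1, h, fun k hk hpar => ?_⟩
    have := hJ hk
    simp only [Set.mem_Icc] at this
    omega
  · refine ⟨i, hi, fun k hk hpar => ?_⟩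
    have hk2 : k ≠ i + 2 := fun hk2 => h (hmid (hk2 ▸ hk))
    have := hJ hk
    simp only [Set.mem_Icc] at this
    omega

section ParityColoring

variable {V : Type*}

open Classical in
noncomputable def parityColoring (s : ℕ → Option V) (v : V) : Option (Fin 2) :=
  if h : ∃ i, s i = some v then some ⟨Nat.find h % 2, Nat.mod_lt _ two_pos⟩ else none

variable {s : ℕ → Option V}

lemma parityColoring_eq_some (hs : ∀ i j v, s i = some v → s j = some v → i = j)
    {j : ℕ} {v : V} (hv : s j = some v) :
    parityColoring s v = some ⟨j % 2, Nat.mod_lt _ two_pos⟩ := by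
  classical
  have h : ∃ i, s i = some v := ⟨j, hv⟩
  simp only [parityColoring, dif_pos h, hs _ _ _ (Nat.find_spec h) hv]

lemma exists_of_parityColoring_eq_some {v : V} {c : Fin 2} (h : parityColoring s v = some c) :
    ∃ j, s j = some v ∧ c = ⟨j % 2, Nat.mod_lt _ two_pos⟩ := by
  classical
  unfold parityColoring at h
  split_ifs at h with hv
  exact ⟨_, Nat.find_spec hv, (Option.some.inj h).symm⟩

theorem isCFColoring_parityColoring (G : SimpleGraph V)
    (hs : ∀ i j v, s i = some v → s j = some v → i = j)
    (hwindow : ∀ v, ∃ i, let J := {j | ∃ w ∈ insert v (G.neighborSet v), s j = some w}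
      i ∈ J ∧ J ⊆ Set.Icc i (i + 2) ∧ (i + 2 ∈ J → i + 1 ∈ J)) :
    IsCFColoring G (parityColoring s) := by
  intro v
  obtain ⟨i, hi, hJ, hmid⟩ := hwindow v
  obtain ⟨j, ⟨u, hu, hsu⟩, hj⟩ := Nat.exists_mem_forall_mod_two_eq_imp_eq hi hJ hmid
  refine ⟨u, hu, by simp [parityColoring_eq_some hs hsu], fun w hw hwu => ?_⟩
  rw [parityColoring_eq_some hs hsu] at hwu
  obtain ⟨k, hsw, hk⟩ := exists_of_parityColoring_eq_some hwu
  rw [hj k ⟨w, hw, hsw⟩ (Fin.mk.inj_iff.mp hk).symm, hsu] at hsw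
  exact (Option.some.inj hsw).symm

end ParityColoring

section Greedy

variable {V : Type*} [Fintype V] (x : V → ℝ)

lemma exists_rightmost_near_leftmost {A : Finset V} (hA : A.Nonempty) :
    ∃ s : V, ∃ u ∈ A, (∀ a ∈ A, x u ≤ x a) ∧ x u ≤ x s ∧ x s ≤ x u + 1 ∧
      ∀ w, x w ≤ x u + 1 → x w ≤ x s := by
  classical
  obtain ⟨u, hu, humin⟩ := A.exists_min_image x hA
  obtain ⟨s, hs, hsmax⟩ :=
    (Finset.univ.filter fun w => x w ≤ x u + 1).exists_max_image x ⟨u, by simp⟩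
  simp only [Finset.mem_filter, Finset.mem_univ, true_and] at hs hsmax
  exact ⟨s, u, hu, humin, hsmax u (by linarith), hs, hsmax⟩

open Classical in
noncomputable def greedyStep (A : Finset V) : Option V :=
  if hA : A.Nonempty then some (exists_rightmost_near_leftmost x hA).choose else none

variable {x}

lemma greedyStep_spec {A : Finset V} {s : V} (h : greedyStep x A = some s) :
    ∃ u ∈ A, (∀ a ∈ A, x u ≤ x a) ∧ x u ≤ x s ∧ x s ≤ x u + 1 ∧
      ∀ w, x w ≤ x u + 1 → x w ≤ x s := by
  unfold greedyStep at h
  split_ifs at h with hA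
  exact Option.some.inj h ▸ (exists_rightmost_near_leftmost x hA).choose_spec

lemma greedyStep_eq_none {A : Finset V} (h : greedyStep x A = none) : A = ∅ := by
  unfold greedyStep at h
  split_ifs at h with hA
  exact Finset.not_nonempty_iff_eq_empty.mp hA

variable (x)

open Classical in
noncomputable def greedySeq : ℕ → Option V
  | 0 => greedyStep x Finset.univ
  | i + 1 => (greedySeq i).bind fun a => greedyStep x {v | x a + 1 < x v}

variable {x}

lemma greedySeq_succ_eq_some {i : ℕ} {b : V} :
    greedySeq x (i + 1) = some b ↔
      ∃ a, greedySeq x i = some a ∧ greedyStep x {v | x a + 1 < x v} = some b := by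
  simp only [greedySeq, Option.bind_eq_some_iff]

lemma greedySeq_lt_succ {i : ℕ} {a b : V} (ha : greedySeq x i = some a)
    (hb : greedySeq x (i + 1) = some b) : x a + 1 < x b := by
  obtain ⟨a', ha', hstep⟩ := greedySeq_succ_eq_some.mp hb
  obtain rfl := Option.some.inj (ha'.symm.trans ha)
  obtain ⟨u, hu, -, hus, -⟩ := greedyStep_spec hstep
  simp only [Finset.mem_filter, Finset.mem_univ, true_and] at hu
  linarith

lemma greedySeq_add_lt (k : ℕ) {i : ℕ} {a b : V} (ha : greedySeq x i = some a)
    (hb : greedySeq x (i + k + 1) = some b) : x a + (k + 1) < x b := by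
  induction k generalizing b with
  | zero => simpa using greedySeq_lt_succ ha hb
  | succ k ih =>
    obtain ⟨c, hc, -⟩ := greedySeq_succ_eq_some.mp hb
    have := greedySeq_lt_succ hc hb
    push_cast
    linarith [ih hc]

lemma greedySeq_injective {i j : ℕ} {a : V} (hi : greedySeq x i = some a)
    (hj : greedySeq x j = some a) : i = j := by
  by_contra hne
  rcases Nat.lt_or_gt_of_ne hne with h | h
  · obtain ⟨k, rfl⟩ := Nat.exists_eq_add_of_lt h
    linarith [greedySeq_add_lt k hi hj, (k.cast_nonneg : (0 : ℝ) ≤ k)]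
  · obtain ⟨k, rfl⟩ := Nat.exists_eq_add_of_lt h
    linarith [greedySeq_add_lt k hj hi, (k.cast_nonneg : (0 : ℝ) ≤ k)]

lemma greedySeq_exists_of_le {i j : ℕ} {c : V} (hc : greedySeq x j = some c) (hij : i ≤ j) :
    ∃ a, greedySeq x i = some a := by
  obtain ⟨k, rfl⟩ := Nat.exists_eq_add_of_le hij
  induction k generalizing c with
  | zero => exact ⟨c, hc⟩
  | succ k ih =>
    obtain ⟨b, hb, -⟩ := greedySeq_succ_eq_some.mp hc
    exact ih hb (by omega)

lemma greedySeq_no_point_between {i : ℕ} {a b : V} (ha : greedySeq x i = some a)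
    (hb : greedySeq x (i + 1) = some b) (w : V) : x w ≤ x b ∨ x a + 2 < x w := by
  obtain ⟨a', ha', hstep⟩ := greedySeq_succ_eq_some.mp hb
  obtain rfl := Option.some.inj (ha'.symm.trans ha)
  obtain ⟨u, hu, -, -, -, hsmax⟩ := greedyStep_spec hstep
  simp only [Finset.mem_filter, Finset.mem_univ, true_and] at hu
  by_cases hw : x w ≤ x u + 1
  · exact .inl (hsmax w hw)
  · exact .inr (by linarith)

lemma exists_greedySeq_eq_none : ∃ n, greedySeq x n = none := by
  by_contra! h
  choose f hf using fun n => Option.ne_none_iff_exists'.mp (h n)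
  exact not_injective_infinite_finite f fun i j hij => greedySeq_injective (hf i) (hij ▸ hf j)

lemma greedyStep_abs_sub_le_one {A : Finset V} {s v : V} (h : greedyStep x A = some s)
    (hv : v ∈ A) (hvs : x v ≤ x s + 1) : |x v - x s| ≤ 1 := by
  obtain ⟨u, -, humin, -, hsu, -⟩ := greedyStep_spec h
  have := humin v hv
  exact abs_le.mpr ⟨by linarith, by linarith⟩

lemma exists_greedySeq_abs_sub_le_one_of_le {i : ℕ} {a v : V} (ha : greedySeq x i = some a)
    (hv : x v ≤ x a + 1) : ∃ j b, greedySeq x j = some b ∧ |x v - x b| ≤ 1 := by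
  induction i generalizing a with
  | zero => exact ⟨0, a, ha, greedyStep_abs_sub_le_one ha (Finset.mem_univ v) hv⟩
  | succ i ih =>
    obtain ⟨a', ha', hstep⟩ := greedySeq_succ_eq_some.mp ha
    by_cases hva' : x v ≤ x a' + 1
    · exact ih ha' hva'
    · exact ⟨i + 1, a, ha, greedyStep_abs_sub_le_one hstep (by simpa using hva') hv⟩

lemma exists_greedySeq_abs_sub_le_one (v : V) :
    ∃ j b, greedySeq x j = some b ∧ |x v - x b| ≤ 1 := by
  classical
  have hex := exists_greedySeq_eq_none (x := x)
  obtain ⟨n, hn, hmin⟩ : ∃ n, greedySeq x n = none ∧ ∀ m < n, greedySeq x m ≠ none :=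
    ⟨_, Nat.find_spec hex, fun _ => Nat.find_min hex⟩
  cases n with
  | zero => exact absurd (greedyStep_eq_none hn) (Finset.univ_nonempty_iff.mpr ⟨v⟩).ne_empty
  | succ m =>
    obtain ⟨a, ha⟩ := Option.ne_none_iff_exists'.mp (hmin m m.lt_succ_self)
    have hstep : greedyStep x {w | x a + 1 < x w} = none := by simpa [greedySeq, ha] using hn
    have hv : x v ≤ x a + 1 := by
      simpa using Finset.eq_empty_iff_forall_notMem.mp (greedyStep_eq_none hstep) v
    exact exists_greedySeq_abs_sub_le_one_of_le ha hv

lemma greedySeq_index_le_add_two {i j : ℕ} {a c v : V} (ha : greedySeq x i = some a)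
    (hc : greedySeq x j = some c) (hva : |x v - x a| ≤ 2) (hvc : |x v - x c| ≤ 2) :
    j ≤ i + 2 := by
  by_contra! hij
  obtain ⟨b, hb⟩ := greedySeq_exists_of_le hc (by omega : i + 1 ≤ j)
  obtain ⟨k, rfl⟩ : ∃ k, j = i + 1 + (k + 1) + 1 := ⟨j - i - 3, by omega⟩
  have hbc := greedySeq_add_lt (k + 1) hb hc
  have hk : (0 : ℝ) ≤ k := k.cast_nonneg
  push_cast at hbc
  rw [abs_le] at hva hvc
  rcases greedySeq_no_point_between ha hb v with hvb | hav <;> linarith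

lemma greedySeq_exists_abs_sub_le_one_of_add_two {i : ℕ} {a c v : V}
    (ha : greedySeq x i = some a) (hc : greedySeq x (i + 2) = some c)
    (hva : |x v - x a| ≤ 2) (hvc : |x v - x c| ≤ 2) :
    ∃ b, greedySeq x (i + 1) = some b ∧ |x v - x b| ≤ 1 := by
  obtain ⟨b, hb, -⟩ := greedySeq_succ_eq_some.mp hc
  have hab := greedySeq_lt_succ ha hb
  have hbc := greedySeq_lt_succ hb hc
  rw [abs_le] at hva hvc
  exact ⟨b, hb, abs_le.mpr ⟨by linarith, by linarith⟩⟩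

end Greedy

theorem hasCFColoring_two_of_abs_sub_le {V : Type*} [Fintype V] (G : SimpleGraph V) (x : V → ℝ)
    (hnear : ∀ u w, u ≠ w → |x u - x w| ≤ 1 → G.Adj u w)
    (hfar : ∀ u w, G.Adj u w → |x u - x w| ≤ 2) : HasCFColoring G 2 := by
  classical
  have mem_of_le_one (v w : V) (h : |x v - x w| ≤ 1) : w ∈ insert v (G.neighborSet v) := by
    rcases eq_or_ne v w with rfl | hne
    · exact Set.mem_insert _ _
    · exact Or.inr (hnear v w hne h)
  have le_two_of_mem (v w : V) (h : w ∈ insert v (G.neighborSet v)) : |x v - x w| ≤ 2 := by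
    rcases h with rfl | h
    · simp
    · exact hfar v w h
  refine ⟨parityColoring (greedySeq x),
    isCFColoring_parityColoring G (fun _ _ _ => greedySeq_injective) fun v => ?_⟩
  have hJ : ∃ j, ∃ w ∈ insert v (G.neighborSet v), greedySeq x j = some w := by
    obtain ⟨j, b, hb, hvb⟩ := exists_greedySeq_abs_sub_le_one v
    exact ⟨j, b, mem_of_le_one v b hvb, hb⟩
  obtain ⟨a, ha, hsa⟩ := Nat.find_spec hJ
  refine ⟨Nat.find hJ, Nat.find_spec hJ, fun j ⟨c, hc, hsc⟩ => ⟨Nat.find_min' hJ ⟨c, hc, hsc⟩,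
    greedySeq_index_le_add_two hsa hsc (le_two_of_mem v a ha) (le_two_of_mem v c hc)⟩, ?_⟩
  rintro ⟨c, hc, hsc⟩
  obtain ⟨b, hb, hvb⟩ := greedySeq_exists_abs_sub_le_one_of_add_two hsa hsc
    (le_two_of_mem v a ha) (le_two_of_mem v c hc)
  exact ⟨b, mem_of_le_one v b hvb, hb⟩

lemma dist_le_two_of_abs_sub_le_one {a b : EuclideanSpace ℝ (Fin 2)}
    (ha : a 1 ∈ Set.Icc 0 √3) (hb : b 1 ∈ Set.Icc 0 √3) (h : |a 0 - b 0| ≤ 1) :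
    dist a b ≤ 2 := by
  have h3 : √3 ^ 2 = 3 := Real.sq_sqrt (by norm_num)
  have hy : (a 1 - b 1) ^ 2 ≤ 3 := by
    nlinarith [ha.1, ha.2, hb.1, hb.2]
  have hx : (a 0 - b 0) ^ 2 ≤ 1 := by
    nlinarith [abs_le.mp h]
  rw [EuclideanSpace.dist_eq, Fin.sum_univ_two, Real.sqrt_le_left (by norm_num)]
  simp only [Real.dist_eq, sq_abs]
  linarith

theorem stmt7 {V : Type*} [Fintype V] (p : V → EuclideanSpace ℝ (Fin 2))
    (hp : ∀ v : V, p v 1 ∈ Set.Icc (0 : ℝ) (Real.sqrt 3)) :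
    HasCFColoring (unitDiskGraph p) 2 := by
  refine hasCFColoring_two_of_abs_sub_le _ (fun v => p v 0)
    (fun u w hne h => ⟨hne, dist_le_two_of_abs_sub_le_one (hp u) (hp w) h⟩) fun u w h => ?_
  simpa [Real.dist_eq] using (PiLp.dist_apply_le (p u) (p w) 0).trans h.2
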